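/- Let (U_α)_{α>0} be a sub-Markovian resolvent of kernels on a measurable space (E, B), and let v: E → [0,∞] be measurable with v ≤ 1 on a subset M ∈ B, such that v restricted to M is U_β-excessive for the restricted resolvent on M and U_α(1_{E∖M}) = 0 for all α. Define w₁ on E by w₁ = v on M and w₁ = 1 on E∖M. Then w₁ is U_β-supermedian on E, i.e., α U_{α+β} w₁ ≤ w₁ for all α > 0. -/

import Mathlib

open scoped Classical
open ENNReal

/-
A resolvent that does not charge `E∖M` cannot see how a function is extended off `M`, so
`U_{α+β} w₁ = U_{α+β} (v 1_M)`. On `M` this is the excessivity of `v`; off `M` it is bounded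
using `v ≤ 1` and the sub-Markov property, since `α ≤ α + β`.
-/

section Kernel

variable {E : Type*} (T : (E → ℝ≥0∞) → E → ℝ≥0∞)

theorem apply_piecewise_one_eq_of_apply_indicator_compl_eq_zero
    (hadd : ∀ f g : E → ℝ≥0∞, ∀ x, T (f + g) x = T f x + T g x) {M : Set E}
    (hnull : ∀ x, T (Mᶜ.indicator fun _ => 1) x = 0) (v : E → ℝ≥0∞) (x : E) :
    T (fun y => if y ∈ M then v y else 1) x = T (fun y => if y ∈ M then v y else 0) x := by
  have hsplit : (fun y => if y ∈ M then v y else 1) =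
      (fun y => if y ∈ M then v y else 0) + Mᶜ.indicator fun _ => 1 := by
    funext y
    by_cases hy : y ∈ M <;> simp [hy]
  rw [hsplit, hadd, hnull, add_zero]

theorem mul_apply_le_one_of_le_one
    (hmono : ∀ f g : E → ℝ≥0∞, (∀ x, f x ≤ g x) → ∀ x, T f x ≤ T g x) {c : ℝ≥0∞}
    (hsub : ∀ x, c * T (fun _ => 1) x ≤ 1) {f : E → ℝ≥0∞} (hf : ∀ y, f y ≤ 1) (x : E) :
    c * T f x ≤ 1 :=
  le_trans (by gcongr; exact hmono _ _ hf x) (hsub x)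

end Kernel

theorem stmt5_general {E : Type*}
    (U : ℝ → (E → ℝ≥0∞) → (E → ℝ≥0∞))
    (hmono : ∀ α > (0:ℝ), ∀ f g : E → ℝ≥0∞, (∀ x, f x ≤ g x) → ∀ x, U α f x ≤ U α g x)
    (hadd : ∀ α > (0:ℝ), ∀ f g : E → ℝ≥0∞, ∀ x, U α (f + g) x = U α f x + U α g x)
    (hsub : ∀ α > (0:ℝ), ∀ x, ENNReal.ofReal α * U α (fun _ => 1) x ≤ 1)
    (β : ℝ) (hβ : 0 < β)
    (M : Set E)
    (hnull : ∀ α > (0:ℝ), ∀ x, U α (Set.indicator Mᶜ fun _ => 1) x = 0)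
    (v : E → ℝ≥0∞) (hv1 : ∀ x ∈ M, v x ≤ 1)
    (hexc : ∀ α > (0:ℝ), ∀ x ∈ M,
      ENNReal.ofReal α * U (α + β) (fun y => if y ∈ M then v y else 0) x ≤ v x)
    (w₁ : E → ℝ≥0∞) (hw₁ : ∀ x, w₁ x = if x ∈ M then v x else 1) :
    ∀ α > (0:ℝ), ∀ x, ENNReal.ofReal α * U (α + β) w₁ x ≤ w₁ x := by
  intro α hα x
  have hαβ : 0 < α + β := by linarith
  rw [funext hw₁, apply_piecewise_one_eq_of_apply_indicator_compl_eq_zero _ (hadd _ hαβ)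
    (hnull _ hαβ)]
  by_cases hx : x ∈ M
  · simpa [hx] using hexc α hα x hx
  · have hv1M : ∀ y, (if y ∈ M then v y else 0) ≤ 1 := fun y => by
      by_cases hy : y ∈ M <;> simp [hy, hv1 y]
    calc ENNReal.ofReal α * U (α + β) (fun y => if y ∈ M then v y else 0) x
        ≤ ENNReal.ofReal (α + β) * U (α + β) (fun y => if y ∈ M then v y else 0) x := by
          gcongr
          linarith
      _ ≤ 1 := mul_apply_le_one_of_le_one _ (hmono _ hαβ) (hsub _ hαβ) hv1M x
      _ = _ := by simp [hx]

/-- Step (1) of the proof of Theorem 2.2: an excessive function `v ≤ 1` on `M`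
extends, by the value `1` on `E∖M`, to a `U_β`-supermedian function on `E`,
provided the resolvent does not charge `E∖M`. -/
theorem stmt5 {E : Type*} [MeasurableSpace E]
    (U : ℝ → (E → ℝ≥0∞) → (E → ℝ≥0∞))
    (hmono : ∀ α > (0:ℝ), ∀ f g : E → ℝ≥0∞, (∀ x, f x ≤ g x) → ∀ x, U α f x ≤ U α g x)
    (hadd : ∀ α > (0:ℝ), ∀ f g : E → ℝ≥0∞, ∀ x, U α (f + g) x = U α f x + U α g x)
    (hsub : ∀ α > (0:ℝ), ∀ x, ENNReal.ofReal α * U α (fun _ => 1) x ≤ 1)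
    (β : ℝ) (hβ : 0 < β)
    (M : Set E) (hMmeas : MeasurableSet M)
    (hnull : ∀ α > (0:ℝ), ∀ x, U α (Set.indicator Mᶜ fun _ => 1) x = 0)
    (v : E → ℝ≥0∞) (hvmeas : Measurable v) (hv1 : ∀ x ∈ M, v x ≤ 1)
    (hexc : ∀ α > (0:ℝ), ∀ x ∈ M,
      ENNReal.ofReal α * U (α + β) (fun y => if y ∈ M then v y else 0) x ≤ v x)
    (hexcsup : ∀ x ∈ M,
      (⨆ α : {a : ℝ // 0 < a},
        ENNReal.ofReal (α : ℝ) * U ((α : ℝ) + β) (fun y => if y ∈ M then v y else 0) x) = v x)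
    (w₁ : E → ℝ≥0∞) (hw₁ : ∀ x, w₁ x = if x ∈ M then v x else 1) :
    ∀ α > (0:ℝ), ∀ x, ENNReal.ofReal α * U (α + β) w₁ x ≤ w₁ x :=
  stmt5_general U hmono hadd hsub β hβ M hnull v hv1 hexc w₁ hw₁
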